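/- arXiv:2311.09594 — 7 statements merged into one kernel-verified Lean document; each statement's English description precedes it below -/
import Mathlib

section
/- Let ζ = ξ+iη and ζ' = ξ'+iη' be complex numbers with ζ ≠ -1, ζ' ≠ ζ, ζ' ≠ 1, and η ≠ η'. Set a = |ζ+1|, b = |ζ'-ζ|, c = |1-ζ'|. Define the vectors in ℝ⁴: v_ζ = (1/(ab))·(2ξ, 2η, 1-|ζ|², 1+|ζ|²), v_{ζ'} = (1/(bc))·(2ξ', 2η', 1-|ζ'|², 1+|ζ'|²), v_∞ = (0,0,-1,1), v_{-1} = (1/(ac))·(-2,0,0,2), v_1 = (1/(ac))·(2,0,0,2). Then there exists a unique quadruple of real numbers (λ, μ, ν, ρ) satisfying λ·v_ζ + μ·v_{ζ'} + ν·v_∞ = ρ·v_1 + (1-ρ)·v_{-1}, and it satisfies λ = bη'/(c(η'-η)), μ = -bη/(a(η'-η)), and ν = (η'(1-|ζ|²) - η(1-|ζ'|²))/(ac(η'-η)). -/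
set_option maxHeartbeats 1000000


open Complex

private theorem key_aux (a b c l m n r ξ η ξ' η' A B : ℝ)
    (ha0 : a ≠ 0) (hb0 : b ≠ 0) (hc0 : c ≠ 0) (hd0 : η' - η ≠ 0)
    (heq : l • ((1/(a*b)) • ![2*ξ, 2*η, 1 - A, 1 + A])
        + m • ((1/(b*c)) • ![2*ξ', 2*η', 1 - B, 1 + B]) + n • ![(0:ℝ), 0, -1, 1]
        = r • ((1/(a*c)) • ![2, 0, 0, 2]) + (1 - r) • ((1/(a*c)) • ![-2, 0, 0, 2])) :
    l = b * η' / (c * (η' - η)) ∧ m = -(b * η) / (a * (η' - η)) ∧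
    n = (η' * (1 - A) - η * (1 - B)) / (a * c * (η' - η)) ∧
    r * (2*b) = b * η' / (c * (η' - η)) * ξ * c + -(b * η) / (a * (η' - η)) * ξ' * a + b := by
  have E0 := congrFun heq 0
  have E1 := congrFun heq 1
  have E2 := congrFun heq 2
  have E3 := congrFun heq 3
  simp only [Pi.add_apply, Pi.smul_apply, smul_eq_mul, Matrix.cons_val_zero, Matrix.cons_val_one,
    Matrix.head_cons, Matrix.cons_val_two, Matrix.tail_cons, Matrix.cons_val_three] at E0 E1 E2 E3
  field_simp at E0 E1 E2 E3
  have h2b : (2*b : ℝ) ≠ 0 := mul_ne_zero two_ne_zero hb0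
  have h2abc : (2*a*b*c : ℝ) ≠ 0 :=
    mul_ne_zero (mul_ne_zero (mul_ne_zero two_ne_zero ha0) hb0) hc0
  have F1 : l*η*c + m*η'*a = 0 := by
    apply mul_left_cancel₀ h2b; linear_combination b*E1
  have FS : l*c + m*a = b := by
    apply mul_left_cancel₀ h2abc; linear_combination (a*b*c)*(E3 + E2)
  have F2 : l*(1-A)*c + m*(1-B)*a = n*(a*b*c) := by
    apply mul_left_cancel₀ hb0; linear_combination b*E2
  have F0 : r*(2*b) = l*ξ*c + m*ξ'*a + b := by
    apply mul_left_cancel₀ h2abc; linear_combination -(a*b*c)*E0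
  have hlc : l*(c*(η'-η)) = b*η' := by linear_combination η'*FS - F1
  have hma : m*(a*(η'-η)) = -(b*η) := by linear_combination F1 - η*FS
  have hl : l = b * η' / (c * (η' - η)) := by
    rw [eq_div_iff (mul_ne_zero hc0 hd0)]; linear_combination hlc
  have hm : m = -(b * η) / (a * (η' - η)) := by
    rw [eq_div_iff (mul_ne_zero ha0 hd0)]; linear_combination hma
  refine ⟨hl, hm, ?_, ?_⟩
  · rw [eq_div_iff (mul_ne_zero (mul_ne_zero ha0 hc0) hd0)]
    apply mul_left_cancel₀ hb0
    linear_combination -(η'-η)*F2 + (1-A)*hlc + (1-B)*hma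
  · rw [hl, hm] at F0; exact F0

/-- The unique solution of the Minkowski-space convexity system at a face of the
hexagon of a layered solid torus. -/
theorem stmt_0 (ξ η ξ' η' : ℝ) (ζ ζ' : ℂ)
    (hζ : ζ = ξ + η * I) (hζ' : ζ' = ξ' + η' * I)
    (h1 : ζ ≠ -1) (h2 : ζ' ≠ ζ) (h3 : ζ' ≠ 1) (h4 : η ≠ η')
    (a b c : ℝ)
    (ha : a = ‖ζ + 1‖) (hb : b = ‖ζ' - ζ‖)
    (hc : c = ‖1 - ζ'‖)
    (vζ vζ' vinf vm1 v1 : Fin 4 → ℝ)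
    (hvζ : vζ = (1/(a*b)) • ![2*ξ, 2*η, 1 - ‖ζ‖ ^ 2, 1 + ‖ζ‖ ^ 2])
    (hvζ' : vζ' = (1/(b*c)) • ![2*ξ', 2*η', 1 - ‖ζ'‖ ^ 2, 1 + ‖ζ'‖ ^ 2])
    (hvinf : vinf = ![0, 0, -1, 1])
    (hvm1 : vm1 = (1/(a*c)) • ![-2, 0, 0, 2])
    (hv1 : v1 = (1/(a*c)) • ![2, 0, 0, 2]) :
    (∃! p : ℝ × ℝ × ℝ × ℝ,
      p.1 • vζ + p.2.1 • vζ' + p.2.2.1 • vinf = p.2.2.2 • v1 + (1 - p.2.2.2) • vm1) ∧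
    ∀ l m n r : ℝ,
      l • vζ + m • vζ' + n • vinf = r • v1 + (1 - r) • vm1 →
      l = b * η' / (c * (η' - η)) ∧
      m = -(b * η) / (a * (η' - η)) ∧
      n = (η' * (1 - ‖ζ‖ ^ 2) - η * (1 - ‖ζ'‖ ^ 2)) / (a * c * (η' - η)) := by
  have ha0 : a ≠ 0 := by
    rw [ha]; exact norm_ne_zero_iff.mpr (fun h => h1 (by linear_combination h))
  have hb0 : b ≠ 0 := by
    rw [hb]; exact norm_ne_zero_iff.mpr (sub_ne_zero.mpr h2)
  have hc0 : c ≠ 0 := by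
    rw [hc]; exact norm_ne_zero_iff.mpr (sub_ne_zero.mpr h3.symm)
  have hd0 : η' - η ≠ 0 := sub_ne_zero.mpr (Ne.symm h4)
  set A := ‖ζ‖ ^ 2 with hA
  set B := ‖ζ'‖ ^ 2 with hB
  subst hvζ hvζ' hvinf hvm1 hv1
  set L := b * η' / (c * (η' - η)) with hL
  set M := -(b * η) / (a * (η' - η)) with hM
  set N := (η' * (1 - A) - η * (1 - B)) / (a * c * (η' - η)) with hN
  set R := (L * ξ * c + M * ξ' * a + b) / (2 * b) with hR
  have key : ∀ l m n r : ℝ,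
      l • ((1/(a*b)) • ![2*ξ, 2*η, 1 - A, 1 + A])
        + m • ((1/(b*c)) • ![2*ξ', 2*η', 1 - B, 1 + B]) + n • ![(0:ℝ), 0, -1, 1]
        = r • ((1/(a*c)) • ![2, 0, 0, 2]) + (1 - r) • ((1/(a*c)) • ![-2, 0, 0, 2]) →
      l = L ∧ m = M ∧ n = N ∧ r = R := by
    intro l m n r hlmr
    obtain ⟨h₁, h₂, h₃, h₄⟩ := key_aux a b c l m n r ξ η ξ' η' A B ha0 hb0 hc0 hd0 hlmr
    refine ⟨h₁, h₂, h₃, ?_⟩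
    rw [hR, eq_div_iff (mul_ne_zero two_ne_zero hb0)]
    rw [hL, hM]
    linear_combination h₄
  have hsol : L • ((1/(a*b)) • ![2*ξ, 2*η, 1 - A, 1 + A])
        + M • ((1/(b*c)) • ![2*ξ', 2*η', 1 - B, 1 + B]) + N • ![(0:ℝ), 0, -1, 1]
        = R • ((1/(a*c)) • ![2, 0, 0, 2]) + (1 - R) • ((1/(a*c)) • ![-2, 0, 0, 2]) := by
    funext i
    fin_cases i <;>
      simp only [Pi.add_apply, Pi.smul_apply, smul_eq_mul, Fin.zero_eta, Fin.mk_one, Fin.reduceFinMk, Matrix.cons_val, Matrix.cons_val_zero,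
        Matrix.cons_val_one, Matrix.head_cons, Matrix.cons_val_two, Matrix.tail_cons,
        Matrix.cons_val_three, hL, hM, hN, hR] <;>
      field_simp <;> ring
  constructor
  · refine ⟨(L, M, N, R), hsol, ?_⟩
    rintro ⟨l, m, n, r⟩ hp
    obtain ⟨h₁, h₂, h₃, h₄⟩ := key l m n r hp
    simp [h₁, h₂, h₃, h₄]
  · intro l m n r hlmr
    obtain ⟨h₁, h₂, h₃, -⟩ := key l m n r hlmr
    exact ⟨h₁, h₂, h₃⟩
end

section
/- Let ζ, ζ' ∈ ℂ, write η = Im ζ and η' = Im ζ'. Suppose a, b, c > 0 and A, B, C ∈ ℝ satisfy the polar decompositions ζ + 1 = a·exp(iA), ζ' - ζ = b·exp(iB), 1 - ζ' = c·exp(iC). Define Z = abη' - bcη + η'(1-|ζ|²) - η(1-|ζ'|²) - ac(η'-η). Then Z = -4abc · sin((A+C)/2) · cos((B-A)/2) · cos((B-C)/2). -/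
open Complex Real

/-- Factorisation of the numerator `Z` of the Minkowski convexity expression at a
face of a layered solid torus. -/
theorem stmt_2 (ζ ζ' : ℂ) (a b c A B C : ℝ)
    (ha : 0 < a) (hb : 0 < b) (hc : 0 < c)
    (hA : ζ + 1 = (a : ℂ) * Complex.exp (A * I))
    (hB : ζ' - ζ = (b : ℂ) * Complex.exp (B * I))
    (hC : 1 - ζ' = (c : ℂ) * Complex.exp (C * I))
    (Z : ℝ)
    (hZ : Z = a * b * ζ'.im - b * c * ζ.im + ζ'.im * (1 - ‖ζ‖ ^ 2)
          - ζ.im * (1 - ‖ζ'‖ ^ 2) - a * c * (ζ'.im - ζ.im)) :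
    Z = -4 * a * b * c * Real.sin ((A + C) / 2) * Real.cos ((B - A) / 2)
          * Real.cos ((B - C) / 2) := by
  -- extract real and imaginary parts of the polar decompositions
  have hAre := congrArg Complex.re hA
  have hAim := congrArg Complex.im hA
  have hBre := congrArg Complex.re hB
  have hBim := congrArg Complex.im hB
  have hCre := congrArg Complex.re hC
  have hCim := congrArg Complex.im hC
  simp only [Complex.add_re, Complex.add_im, Complex.sub_re, Complex.sub_im,
    Complex.one_re, Complex.one_im, Complex.mul_re, Complex.mul_im,
    Complex.ofReal_re, Complex.ofReal_im, Complex.exp_ofReal_mul_I_re,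
    Complex.exp_ofReal_mul_I_im, zero_mul, mul_zero, sub_zero, add_zero,
    zero_add, zero_sub, zero_div] at hAre hAim hBre hBim hCre hCim
  have hz1 : ζ.re = a * Real.cos A - 1 := by linarith
  have hz2 : ζ.im = a * Real.sin A := by linarith
  have hz3 : ζ'.re = 1 - c * Real.cos C := by linarith
  have hz4 : ζ'.im = -(c * Real.sin C) := by linarith
  have habs : (‖ζ‖) ^ 2 = ζ.re ^ 2 + ζ.im ^ 2 := by
    rw [Complex.sq_norm, Complex.normSq_apply]; ring
  have habs' : (‖ζ'‖) ^ 2 = ζ'.re ^ 2 + ζ'.im ^ 2 := by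
    rw [Complex.sq_norm, Complex.normSq_apply]; ring
  -- the two closure constraints
  have h5 : b * Real.cos B = 2 - a * Real.cos A - c * Real.cos C := by linarith
  have h6 : b * Real.sin B = -(a * Real.sin A + c * Real.sin C) := by linarith
  -- half-angle expansions
  have hsA : Real.sin A = 2 * Real.sin (A/2) * Real.cos (A/2) := by
    rw [← Real.sin_two_mul]; ring_nf
  have hsB : Real.sin B = 2 * Real.sin (B/2) * Real.cos (B/2) := by
    rw [← Real.sin_two_mul]; ring_nf
  have hsC : Real.sin C = 2 * Real.sin (C/2) * Real.cos (C/2) := by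
    rw [← Real.sin_two_mul]; ring_nf
  have hcA : Real.cos A = 1 - 2 * Real.sin (A/2) ^ 2 := by
    have h := Real.cos_two_mul (A/2)
    have h2 := Real.sin_sq_add_cos_sq (A/2)
    rw [show 2 * (A/2) = A by ring] at h; linarith
  have hcB : Real.cos B = 1 - 2 * Real.sin (B/2) ^ 2 := by
    have h := Real.cos_two_mul (B/2)
    have h2 := Real.sin_sq_add_cos_sq (B/2)
    rw [show 2 * (B/2) = B by ring] at h; linarith
  have hcC : Real.cos C = 1 - 2 * Real.sin (C/2) ^ 2 := by
    have h := Real.cos_two_mul (C/2)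
    have h2 := Real.sin_sq_add_cos_sq (C/2)
    rw [show 2 * (C/2) = C by ring] at h; linarith
  have hhalf1 : Real.sin ((A + C) / 2)
      = Real.sin (A/2) * Real.cos (C/2) + Real.cos (A/2) * Real.sin (C/2) := by
    rw [show (A + C) / 2 = A/2 + C/2 by ring, Real.sin_add]
  have hhalf2 : Real.cos ((B - A) / 2)
      = Real.cos (B/2) * Real.cos (A/2) + Real.sin (B/2) * Real.sin (A/2) := by
    rw [show (B - A) / 2 = B/2 - A/2 by ring, Real.cos_sub]
  have hhalf3 : Real.cos ((B - C) / 2)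
      = Real.cos (B/2) * Real.cos (C/2) + Real.sin (B/2) * Real.sin (C/2) := by
    rw [show (B - C) / 2 = B/2 - C/2 by ring, Real.cos_sub]
  rw [hcB, hcA, hcC] at h5
  rw [hsB, hsA, hsC] at h6
  rw [hZ, habs, habs', hz1, hz2, hz3, hz4, hsA, hsC, hcA, hcC,
    hhalf1, hhalf2, hhalf3]
  set sa := Real.sin (A/2)
  set ca := Real.cos (A/2)
  set sb := Real.sin (B/2)
  set cb := Real.cos (B/2)
  set sc := Real.sin (C/2)
  set cc := Real.cos (C/2)
  have P1 : sa ^ 2 + ca ^ 2 = 1 := Real.sin_sq_add_cos_sq (A/2)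
  have P2 : sb ^ 2 + cb ^ 2 = 1 := Real.sin_sq_add_cos_sq (B/2)
  have P3 : sc ^ 2 + cc ^ 2 = 1 := Real.sin_sq_add_cos_sq (C/2)
  linear_combination
    (a * c * ((2*sa*ca) * (1 - 2*sc^2) + (1 - 2*sa^2) * (2*sc*cc))) * h5
    + (a * c * (1 - ((1 - 2*sa^2) * (1 - 2*sc^2) - (2*sa*ca) * (2*sc*cc)))) * h6
    + (4*cb^2*sc*cc*a*b*c + 4*sb*cb*sc^2*a*b*c) * P1
    + (4*sc*cc*a*b*c + 4*sa*ca*cc^2*a*b*c - 4*sa^2*sc*cc*a*b*c) * P2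
    + (4*sa*ca*a*b*c - 4*sa*ca*sb^2*a*b*c + 4*sa^2*sb*cb*a*b*c) * P3
end

section
/- For all real numbers A, B, C: sin C · (1 + cos(A - B)) + sin A · (1 + cos(B - C)) + sin B · (1 - cos(A - C)) = 4 · sin((A+C)/2) · cos((B-A)/2) · cos((B-C)/2). -/
/-- A trigonometric identity in three real variables. -/
theorem stmt_3 (A B C : ℝ) :
    Real.sin C * (1 + Real.cos (A - B)) + Real.sin A * (1 + Real.cos (B - C))
      + Real.sin B * (1 - Real.cos (A - C))
      = 4 * Real.sin ((A + C) / 2) * Real.cos ((B - A) / 2) * Real.cos ((B - C) / 2) := by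
  have ha := Real.sin_sq_add_cos_sq (A/2)
  have hb := Real.sin_sq_add_cos_sq (B/2)
  have hc := Real.sin_sq_add_cos_sq (C/2)
  have sinD : ∀ x : ℝ, Real.sin x = 2 * Real.sin (x/2) * Real.cos (x/2) := by
    intro x
    have h := Real.sin_two_mul (x/2)
    rw [show 2*(x/2) = x by ring] at h
    linarith
  have cosD : ∀ x : ℝ, Real.cos x = 1 - 2 * Real.sin (x/2) ^ 2 := by
    intro x
    have h := Real.cos_two_mul (x/2)
    rw [show 2*(x/2) = x by ring] at h
    have h2 := Real.sin_sq_add_cos_sq (x/2)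
    nlinarith [h, h2]
  rw [sinD A, sinD B, sinD C, cosD (A-B), cosD (B-C), cosD (A-C),
      show (A-B)/2 = A/2 - B/2 by ring, show (B-C)/2 = B/2 - C/2 by ring,
      show (A-C)/2 = A/2 - C/2 by ring, show (A+C)/2 = A/2 + C/2 by ring,
      show (B-A)/2 = B/2 - A/2 by ring,
      Real.sin_sub, Real.sin_sub, Real.sin_sub, Real.sin_add,
      Real.cos_sub, Real.cos_sub]
  set sa := Real.sin (A/2); set ca := Real.cos (A/2)
  set sb := Real.sin (B/2); set cb := Real.cos (B/2)
  set sc := Real.sin (C/2); set cc := Real.cos (C/2)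
  linear_combination (-4*cb^2*sc*cc - 4*sb^2*sc*cc) * ha
    + (-4*sc*cc - 4*sa*ca*cc^2 - 4*sa*ca*sc^2) * hb + (-4*sa*ca) * hc
end

section
/- Let ζ, ζ' ∈ ℂ, write ξ = Re ζ, η = Im ζ, ξ' = Re ζ', η' = Im ζ'. Suppose a, b, c > 0 and A, B, C ∈ ℝ satisfy ζ + 1 = a·exp(iA), ζ' - ζ = b·exp(iB), 1 - ζ' = c·exp(iC), with 0 < B < π, B - π < A < B, and B - π < C < B. Define λ = bη'/(c(η'-η)), μ = -bη/(a(η'-η)), ν = (η'(1-|ζ|²) - η(1-|ζ'|²))/(ac(η'-η)). Then λ + μ + ν > 1 if and only if -π < (A+C)/2 < 0. -/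
open Complex Real

/-- The local convexity condition `λ + μ + ν > 1` at the face `(ζ ζ' ∞)` holds if and
only if `-π < (A+C)/2 < 0`. -/
theorem stmt_4 (ζ ζ' : ℂ) (a b c A B C : ℝ)
    (ha : 0 < a) (hb : 0 < b) (hc : 0 < c)
    (hA : ζ + 1 = (a : ℂ) * Complex.exp (A * I))
    (hB : ζ' - ζ = (b : ℂ) * Complex.exp (B * I))
    (hC : 1 - ζ' = (c : ℂ) * Complex.exp (C * I))
    (hB0 : 0 < B) (hBπ : B < π)
    (hA1 : B - π < A) (hA2 : A < B)
    (hC1 : B - π < C) (hC2 : C < B)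
    (l m n : ℝ)
    (hl : l = b * ζ'.im / (c * (ζ'.im - ζ.im)))
    (hm : m = -(b * ζ.im) / (a * (ζ'.im - ζ.im)))
    (hn : n = (ζ'.im * (1 - ‖ζ‖ ^ 2) - ζ.im * (1 - ‖ζ'‖ ^ 2))
          / (a * c * (ζ'.im - ζ.im))) :
    l + m + n > 1 ↔ (-π < (A + C) / 2 ∧ (A + C) / 2 < 0) := by
  -- extract real and imaginary parts
  have hAre : ζ.re + 1 = a * Real.cos A := by
    have := congrArg Complex.re hA
    simpa [Complex.exp_ofReal_mul_I_re] using this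
  have hAim : ζ.im = a * Real.sin A := by
    have := congrArg Complex.im hA
    simpa [Complex.exp_ofReal_mul_I_im] using this
  have hBre : ζ'.re - ζ.re = b * Real.cos B := by
    have := congrArg Complex.re hB
    simpa [Complex.exp_ofReal_mul_I_re] using this
  have hBim : ζ'.im - ζ.im = b * Real.sin B := by
    have := congrArg Complex.im hB
    simpa [Complex.exp_ofReal_mul_I_im] using this
  have hCre : 1 - ζ'.re = c * Real.cos C := by
    have := congrArg Complex.re hC
    simpa [Complex.exp_ofReal_mul_I_re] using this
  have hCim : -ζ'.im = c * Real.sin C := by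
    have := congrArg Complex.im hC
    simpa [Complex.exp_ofReal_mul_I_im] using this
  have hIm : a * Real.sin A + b * Real.sin B + c * Real.sin C = 0 := by
    rw [← hAim, ← hBim, ← hCim]; ring
  have hRe : a * Real.cos A + b * Real.cos B + c * Real.cos C = 2 := by
    rw [← hBre, ← hCre]; have := hAre; linarith
  have hsB : 0 < Real.sin B := Real.sin_pos_of_pos_of_lt_pi hB0 hBπ
  have hne : 0 < ζ'.im - ζ.im := by rw [hBim]; positivity
  have habs : ‖ζ‖ ^ 2 = ζ.re ^ 2 + ζ.im ^ 2 := by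
    rw [Complex.sq_norm, Complex.normSq_apply]; ring
  have habs' : ‖ζ'‖ ^ 2 = ζ'.re ^ 2 + ζ'.im ^ 2 := by
    rw [Complex.sq_norm, Complex.normSq_apply]; ring
  have hre : ζ.re = a * Real.cos A - 1 := by linarith
  have hre' : ζ'.re = 1 - c * Real.cos C := by linarith
  have him' : ζ'.im = -(c * Real.sin C) := by linarith
  -- step 1: clear denominators
  have key2 : (l + m + n - 1) * (a * c * (ζ'.im - ζ.im)) =
      a * b * ζ'.im - b * c * ζ.im
        + (ζ'.im * (1 - ‖ζ‖ ^ 2) - ζ.im * (1 - ‖ζ'‖ ^ 2))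
        - a * c * (ζ'.im - ζ.im) := by
    subst hl hm hn
    field_simp
    ring
  -- step 2: trig form of the numerator
  have key3 : a * b * ζ'.im - b * c * ζ.im
        + (ζ'.im * (1 - ‖ζ‖ ^ 2) - ζ.im * (1 - ‖ζ'‖ ^ 2))
        - a * c * (ζ'.im - ζ.im)
      = -(a * b * c) * (Real.sin A + Real.sin B + Real.sin C + Real.sin (A + C - B)) := by
    have pyA := Real.sin_sq_add_cos_sq A
    have pyC := Real.sin_sq_add_cos_sq C
    have hx : Real.sin (A + C - B) =
        (Real.sin A * Real.cos C + Real.cos A * Real.sin C) * Real.cos B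
          - (Real.cos A * Real.cos C - Real.sin A * Real.sin C) * Real.sin B := by
      rw [Real.sin_sub, Real.sin_add, Real.cos_add]
    rw [habs, habs', hre, hre', hAim, him', hx]
    linear_combination
      (a * c * (1 - (Real.cos A * Real.cos C - Real.sin A * Real.sin C))) * hIm
        + (a * c * (Real.sin A * Real.cos C + Real.cos A * Real.sin C)) * hRe
  -- step 3: product form
  have sas : ∀ x y : ℝ, Real.sin x + Real.sin y =
      2 * Real.sin ((x + y) / 2) * Real.cos ((x - y) / 2) := by
    intro x y
    have h := Real.sin_sub_sin x (-y)
    rw [Real.sin_neg, show x - -y = x + y by ring, show x + -y = x - y by ring] at h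
    linarith
  have e1 : Real.sin A + Real.sin C =
      2 * Real.sin ((A + C) / 2) * Real.cos ((A - C) / 2) := sas A C
  have e2 : Real.sin B + Real.sin (A + C - B) =
      2 * Real.sin ((A + C) / 2) * Real.cos (B - (A + C) / 2) := by
    have h := sas B (A + C - B)
    rw [show (B + (A + C - B)) / 2 = (A + C) / 2 by ring,
      show (B - (A + C - B)) / 2 = B - (A + C) / 2 by ring] at h
    exact h
  have e3 : Real.cos ((A - C) / 2) + Real.cos (B - (A + C) / 2) =
      2 * Real.cos ((B - C) / 2) * Real.cos ((B - A) / 2) := by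
    have h := Real.cos_add_cos ((A - C) / 2) (B - (A + C) / 2)
    rw [show ((A - C) / 2 + (B - (A + C) / 2)) / 2 = (B - C) / 2 by ring,
      show ((A - C) / 2 - (B - (A + C) / 2)) / 2 = (A - B) / 2 by ring,
      show (A - B) / 2 = -((B - A) / 2) by ring, Real.cos_neg] at h
    exact h
  have hprod : (l + m + n - 1) * (a * c * (ζ'.im - ζ.im)) =
      -Real.sin ((A + C) / 2) *
        (4 * a * b * c * Real.cos ((B - A) / 2) * Real.cos ((B - C) / 2)) := by
    rw [key2, key3]
    linear_combination (-(a * b * c)) * e1 + (-(a * b * c)) * e2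
      + (-(2 * a * b * c * Real.sin ((A + C) / 2))) * e3
  have hcos1 : 0 < Real.cos ((B - A) / 2) :=
    Real.cos_pos_of_mem_Ioo (Set.mem_Ioo.mpr ⟨by linarith, by linarith⟩)
  have hcos2 : 0 < Real.cos ((B - C) / 2) :=
    Real.cos_pos_of_mem_Ioo (Set.mem_Ioo.mpr ⟨by linarith, by linarith⟩)
  have hpos3 : 0 < 4 * a * b * c * Real.cos ((B - A) / 2) * Real.cos ((B - C) / 2) := by
    positivity
  have hpos2 : 0 < a * c * (ζ'.im - ζ.im) := mul_pos (mul_pos ha hc) hne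
  have hiff : l + m + n > 1 ↔ Real.sin ((A + C) / 2) < 0 := by
    have h1 : l + m + n > 1 ↔ 0 < l + m + n - 1 := by
      constructor <;> intro h <;> linarith
    rw [h1, ← mul_pos_iff_of_pos_right hpos2, hprod,
      mul_pos_iff_of_pos_right hpos3, neg_pos]
  rw [hiff]
  have hs1 : -π < (A + C) / 2 := by linarith
  have hs2 : (A + C) / 2 < π := by linarith
  constructor
  · intro h
    refine ⟨hs1, ?_⟩
    by_contra hle
    push_neg at hle
    have := Real.sin_nonneg_of_nonneg_of_le_pi hle (le_of_lt hs2)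
    linarith
  · rintro ⟨h1, h2⟩
    have : 0 < Real.sin (-((A + C) / 2)) :=
      Real.sin_pos_of_pos_of_lt_pi (by linarith) (by linarith)
    rw [Real.sin_neg] at this
    linarith
end

section
/- Let a, b, c > 0 and A, B, C ∈ ℝ with 0 < B < π, B - π < A < B, and B - π < C < B. If a·exp(iA) + b·exp(iB) + c·exp(iC) = 2, then min(A, C) < 0. -/
open Complex Real

/-- If the three hexagon side vectors `a·e^{iA}`, `b·e^{iB}`, `c·e^{iC}` sum to `2`,
with the stated angle constraints, then `min A C < 0`. -/
theorem stmt_6 (a b c A B C : ℝ)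
    (ha : 0 < a) (hb : 0 < b) (hc : 0 < c)
    (hB0 : 0 < B) (hBπ : B < π)
    (hA1 : B - π < A) (hA2 : A < B)
    (hC1 : B - π < C) (hC2 : C < B)
    (hsum : (a : ℂ) * Complex.exp (A * I) + (b : ℂ) * Complex.exp (B * I)
          + (c : ℂ) * Complex.exp (C * I) = 2) :
    min A C < 0 := by
  by_contra h
  push_neg at h
  have hA0 : 0 ≤ A := le_trans h (min_le_left _ _)
  have hC0 : 0 ≤ C := le_trans h (min_le_right _ _)
  have him := congrArg Complex.im hsum
  simp [Complex.exp_mul_I, Complex.add_im, Complex.mul_im, Complex.mul_re, Complex.sin_ofReal_re] at him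
  have hsA : 0 ≤ Real.sin A := Real.sin_nonneg_of_nonneg_of_le_pi hA0 (by linarith)
  have hsC : 0 ≤ Real.sin C := Real.sin_nonneg_of_nonneg_of_le_pi hC0 (by linarith)
  have hsB : 0 < Real.sin B := Real.sin_pos_of_pos_of_lt_pi hB0 hBπ
  nlinarith [mul_nonneg ha.le hsA, mul_nonneg hc.le hsC, mul_pos hb hsB]
end

section
/- Let ζ = ξ + iη ∈ ℂ with η ≠ 0. Define the vectors in ℝ⁴: v_ζ = (1/|ζ+1|²)·(2ξ, 2η, 1-ξ²-η², 1+ξ²+η²), v_{-ζ} = (1/|ζ+1|²)·(-2ξ, -2η, 1-ξ²-η², 1+ξ²+η²), v_∞ = (0,0,-1,1), v_{-1} = (1/(2|ζ+1|))·(-2,0,0,2), v_1 = (1/(2|ζ+1|))·(2,0,0,2). Then the equation ρ·v_ζ + (1-ρ)·v_{-ζ} = λ·v_∞ + μ·v_1 + ν·v_{-1} in ℝ⁴ has a unique real solution (ρ, λ, μ, ν), given by ρ = 1/2, λ = (|ζ|² - 1)/|ζ+1|², and μ = ν = 1/|ζ+1|. -/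
set_option maxHeartbeats 1000000

open Complex

/-- The unique solution of the Minkowski convexity system at the core face
`(-1 1 ∞)` of a layered solid torus. -/
theorem stmt_8 (ξ η : ℝ) (hη : η ≠ 0) (ζ : ℂ) (hζ : ζ = ξ + η * I)
    (vζ vmζ vinf vm1 v1 : Fin 4 → ℝ)
    (hvζ : vζ = (1 / (‖ζ + 1‖) ^ 2) •
        ![2*ξ, 2*η, 1 - ξ^2 - η^2, 1 + ξ^2 + η^2])
    (hvmζ : vmζ = (1 / (‖ζ + 1‖) ^ 2) •
        ![-2*ξ, -2*η, 1 - ξ^2 - η^2, 1 + ξ^2 + η^2])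
    (hvinf : vinf = ![0, 0, -1, 1])
    (hvm1 : vm1 = (1 / (2 * ‖ζ + 1‖)) • ![-2, 0, 0, 2])
    (hv1 : v1 = (1 / (2 * ‖ζ + 1‖)) • ![2, 0, 0, 2]) :
    ∀ r l m n : ℝ,
      r • vζ + (1 - r) • vmζ = l • vinf + m • v1 + n • vm1 ↔
      (r = 1/2 ∧ l = (‖ζ‖ ^ 2 - 1) / (‖ζ + 1‖) ^ 2 ∧
        m = 1 / ‖ζ + 1‖ ∧ n = 1 / ‖ζ + 1‖) := by
  subst hζ hvζ hvmζ hvinf hvm1 hv1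
  set a := ‖((ξ:ℂ) + η * I + 1)‖ with ha_def
  have ha2 : a ^ 2 = (ξ+1)^2 + η^2 := by
    rw [ha_def, Complex.sq_norm, Complex.normSq_apply]
    simp
    ring
  have hapos : 0 < a := by
    have h2 : 0 < a ^ 2 := by rw [ha2]; positivity
    nlinarith [norm_nonneg ((ξ:ℂ) + η * I + 1)]
  have ha : a ≠ 0 := ne_of_gt hapos
  have hb2 : (‖((ξ:ℂ) + η * I)‖) ^ 2 = ξ^2 + η^2 := by
    rw [Complex.sq_norm, Complex.normSq_apply]
    simp
    ring
  intro r l m n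
  constructor
  · intro h
    have h0 := congrFun h 0
    have h1 := congrFun h 1
    have h2 := congrFun h 2
    have h3 := congrFun h 3
    simp [Pi.add_apply, Pi.smul_apply, smul_eq_mul] at h0 h1 h2 h3
    have hr : r = 1/2 := by
      have h1' : (2*r - 1) * (2*η) = 0 := by
        field_simp at h1
        nlinarith [h1, sq_nonneg a]
      rcases mul_eq_zero.mp h1' with h | h
      · linarith
      · exact absurd (by linarith) hη
    have hl2 : l * a ^ 2 = ξ^2 + η^2 - 1 := by
      field_simp at h2
      linarith [h2]
    have hmn : m = n := by
      field_simp at h0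
      have : (2*r - 1) * (2*ξ) * a = (m - n) * a ^ 2 := by nlinarith [h0]
      rw [hr] at this
      have h' : (m - n) * a ^ 2 = 0 := by linarith [this]
      have := mul_eq_zero.mp h'
      rcases this with h | h
      · linarith
      · exact absurd h (pow_ne_zero 2 ha)
    have hm : m = 1 / a := by
      field_simp at h3
      have key : (m * a - 1) * (2 * a) = 0 := by
        linear_combination (-a) * h3 + (-a) * hl2 + a^2 * hmn
      rcases mul_eq_zero.mp key with hk | hk
      · field_simp
        linarith
      · exact absurd hk (by positivity)
    refine ⟨hr, ?_, hm, by rw [← hmn]; exact hm⟩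
    rw [hb2]
    rw [eq_div_iff (pow_ne_zero 2 ha)]
    linarith [hl2]
  · rintro ⟨hr, hl, hm, hn⟩
    subst hr hl hm hn
    funext i
    fin_cases i <;>
      simp [Pi.add_apply, Pi.smul_apply, smul_eq_mul, hb2] <;>
      field_simp <;> ring
end

section
/- Let ζ = ξ + iη ∈ ℂ with η ≠ 0. Define the vectors in ℝ⁴: v_{-1} = (1/|ζ-1|)·(-2,0,0,2), v_1 = (1/|ζ-1|)·(2,0,0,2), v_∞ = (0,0,-1,1), v_0 = (1/|ζ|)·(0,0,1,1), v_ζ = (1/(|ζ|·|ζ-1|))·(2ξ, 2η, 1-|ζ|², 1+|ζ|²). Then the equation λ·v_∞ + μ·v_0 + ν·v_ζ = ρ·v_1 + (1-ρ)·v_{-1} in ℝ⁴ has a unique real solution (λ, μ, ν, ρ), given by λ = 1/|ζ-1|, μ = |ζ|/|ζ-1|, ν = 0, ρ = 1/2; moreover λ + μ + ν = (|ζ| + 1)/|ζ-1| > 1. -/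
open Complex

lemma stmt_10_aux (a b ξ η : ℝ) (hapos : 0 < a) (hbpos : 0 < b) (hη : η ≠ 0)
    (ha2 : a ^ 2 = ξ ^ 2 + η ^ 2) (hb2 : b ^ 2 = (ξ - 1) ^ 2 + η ^ 2) :
    (a + 1) / b > 1 := by
  rw [gt_iff_lt, lt_div_iff₀ hbpos, one_mul]
  have hη2 : (0:ℝ) < η ^ 2 := by positivity
  have habs : |ξ| < a := by
    have h1 : |ξ| ^ 2 < a ^ 2 := by rw [_root_.sq_abs]; linarith
    exact lt_of_pow_lt_pow_left₀ 2 hapos.le h1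
  have haξ : -ξ < a := lt_of_le_of_lt (neg_le_abs ξ) habs
  have hsq : b ^ 2 < (a + 1) ^ 2 := by nlinarith
  exact lt_of_pow_lt_pow_left₀ 2 (by positivity) hsq

/-- The unique solution of the Minkowski convexity system at the core face
`(0 ζ ∞)` of a side-by-side (double) layered solid torus, and the local
convexity inequality there. -/
theorem stmt_10 (ξ η : ℝ) (hη : η ≠ 0) (ζ : ℂ) (hζ : ζ = ξ + η * I)
    (vm1 v1 vinf v0 vζ : Fin 4 → ℝ)
    (hvm1 : vm1 = (1 / ‖ζ - 1‖) • ![-2, 0, 0, 2])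
    (hv1 : v1 = (1 / ‖ζ - 1‖) • ![2, 0, 0, 2])
    (hvinf : vinf = ![0, 0, -1, 1])
    (hv0 : v0 = (1 / ‖ζ‖) • ![0, 0, 1, 1])
    (hvζ : vζ = (1 / (‖ζ‖ * ‖ζ - 1‖)) •
        ![2*ξ, 2*η, 1 - ‖ζ‖ ^ 2, 1 + ‖ζ‖ ^ 2]) :
    (∀ l m n r : ℝ,
      l • vinf + m • v0 + n • vζ = r • v1 + (1 - r) • vm1 ↔
      (l = 1 / ‖ζ - 1‖ ∧ m = ‖ζ‖ / ‖ζ - 1‖ ∧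
        n = 0 ∧ r = 1/2)) ∧
    1 / ‖ζ - 1‖ + ‖ζ‖ / ‖ζ - 1‖ + 0
      = (‖ζ‖ + 1) / ‖ζ - 1‖ ∧
    (‖ζ‖ + 1) / ‖ζ - 1‖ > 1 := by
  set a := ‖ζ‖ with ha
  set b := ‖ζ - 1‖ with hb
  have hζ0 : ζ ≠ 0 := by
    intro h; apply hη
    have := congrArg Complex.im (hζ ▸ h)
    simpa using this
  have hζ1 : ζ ≠ 1 := by
    intro h; apply hη
    have := congrArg Complex.im (hζ ▸ h)
    simpa using this
  have hapos : 0 < a := by simpa [ha] using (norm_pos_iff.mpr hζ0)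
  have hbpos : 0 < b := by
    have : ζ - 1 ≠ 0 := sub_ne_zero.mpr hζ1
    simpa [hb] using (norm_pos_iff.mpr this)
  have ha2 : a ^ 2 = ξ ^ 2 + η ^ 2 := by
    rw [ha, Complex.sq_norm, hζ]
    simp [Complex.normSq_apply]
    ring
  have hb2 : b ^ 2 = (ξ - 1) ^ 2 + η ^ 2 := by
    rw [hb, Complex.sq_norm, hζ]
    simp [Complex.normSq_apply]
    ring
  refine ⟨?_, by ring, ?_⟩
  · intro l m n r
    constructor
    · intro h
      rw [hvm1, hv1, hvinf, hv0, hvζ, funext_iff] at h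
      have h0 := h 0
      have h1 := h 1
      have h2 := h 2
      have h3 := h 3
      simp [Matrix.cons_val_zero, Matrix.cons_val_one, Matrix.head_cons,
        Fin.isValue, Matrix.cons_val_fin_one, smul_eq_mul] at h0 h1 h2 h3
      have hn : n = 0 := by
        rcases h1 with h | h | h
        · exact h
        · rcases h with h | h
          · exact absurd h hbpos.ne'
          · exact absurd h hapos.ne'
        · exact absurd h hη
      subst hn
      simp at h0 h2 h3
      -- h0 : 0 = r * (1/b * 2) + (1-r) * (1/b * -2)
      have hr : r = 1/2 := by
        field_simp at h0
        nlinarith [h0, hbpos]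
      have hl : l = 1 / b := by
        field_simp at h3 h2 ⊢
        nlinarith [h3, h2, hapos, hbpos]
      have hm : m = a / b := by
        field_simp at h3 h2 ⊢
        nlinarith [h3, h2, hapos, hbpos]
      exact ⟨hl, hm, rfl, hr⟩
    · rintro ⟨hl, hm, hn, hr⟩
      subst hl hm hn hr hvm1 hv1 hvinf hv0 hvζ
      funext i
      fin_cases i <;>
        simp [Matrix.cons_val_zero, Matrix.cons_val_one, Matrix.head_cons, smul_eq_mul] <;>
        field_simp <;> ring
  · exact stmt_10_aux a b ξ η hapos hbpos hη ha2 hb2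
end
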